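/- Let A = (Q, Σ, δ, s, F) be a DFA in which the initial state s has no incoming transitions and every state is reachable from s, and let u, v ∈ Q be distinct states. If inf I_u = inf I_v or inf I_u = sup I_v, then inf I_u has infinite length; likewise, if sup I_u = sup I_v or sup I_u = inf I_v, then sup I_u has infinite length. -/

import Mathlib

/-- A (possibly left-infinite) string over alphabet `A`, indexed from the END:
`f i` is the `i`-th character from the right, and `⊥` means the position is
past the beginning of the string.  The elements of `Σ* ∪ Σ^ω` are the
well-formed (`CStr.WF`) such functions. -/
abbrev CStr (A : Type*) := ℕ → WithBot A

/-- Well-formed: once we run out of characters going leftwards, it stays so. -/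
def CStr.WF {A : Type*} (f : CStr A) : Prop := ∀ i, f i = ⊥ → f (i + 1) = ⊥

/-- The string is finite (an element of `Σ*`). -/
def CStr.Finite {A : Type*} (f : CStr A) : Prop := ∃ i, f i = ⊥

/-- Length of a finite string. -/
noncomputable def CStr.length {A : Type*} (f : CStr A) : ℕ := sInf {i | f i = ⊥}

/-- A finite string, given as a list read left-to-right, viewed as a `CStr`. -/
def CStr.ofList {A : Type*} (w : List A) : CStr A := fun i =>
  if h : i < w.length then (w.get ⟨w.length - 1 - i, by omega⟩ : WithBot A) else ⊥

/-- The co-lexicographic (strict) order on `Σ* ∪ Σ^ω`: compare the last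
characters first (position `0`), a missing character (`⊥`) being smaller
than every character of the alphabet. -/
def colexLt {A : Type*} [LinearOrder A] (f g : CStr A) : Prop :=
  ∃ i, (∀ j, j < i → f j = g j) ∧ f i < g i

/-- The non-strict co-lex order. -/
def colexLe {A : Type*} [LinearOrder A] (f g : CStr A) : Prop := colexLt f g ∨ f = g

/-- `g` is the greatest lower bound (infimum) of `S` in `(Σ* ∪ Σ^ω, ≤)`. -/
def IsColexGLB {A : Type*} [LinearOrder A] (S : Set (CStr A)) (g : CStr A) : Prop :=
  g.WF ∧ (∀ f ∈ S, colexLe g f) ∧ ∀ h, CStr.WF h → (∀ f ∈ S, colexLe h f) → colexLe h g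

/-- `g` is the least upper bound (supremum) of `S` in `(Σ* ∪ Σ^ω, ≤)`. -/
def IsColexLUB {A : Type*} [LinearOrder A] (S : Set (CStr A)) (g : CStr A) : Prop :=
  g.WF ∧ (∀ f ∈ S, colexLe f g) ∧ ∀ h, CStr.WF h → (∀ f ∈ S, colexLe f h) → colexLe g h

/-- A DFA `(Q, A, δ, start, accept)` with a partial transition function. -/
structure PDFA (A Q : Type*) where
  δ : Q → A → Option Q
  start : Q
  accept : Set Q

/-- The transition function extended to finite strings (read left-to-right). -/
def PDFA.δStar {A Q : Type*} (M : PDFA A Q) : Q → List A → Option Q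
  | q, [] => some q
  | q, a :: w => (M.δ q a).bind fun q' => M.δStar q' w

/-- `I_u`: the set of finite strings reaching `u` from the initial state. -/
def PDFA.I {A Q : Type*} (M : PDFA A Q) (u : Q) : Set (List A) :=
  {w | M.δStar M.start w = some u}

/-- The initial state has no incoming transitions. -/
def PDFA.NoIncomingStart {A Q : Type*} (M : PDFA A Q) : Prop :=
  ∀ v a, M.δ v a ≠ some M.start

/-- Every state is reachable from the initial state. -/
def PDFA.Reachable {A Q : Type*} (M : PDFA A Q) : Prop :=
  ∀ u, ∃ w : List A, M.δStar M.start w = some u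

/-- Input consistency: all transitions entering a state `u` carry the same
label `lam u`. -/
def PDFA.InputConsistent {A Q : Type*} (M : PDFA A Q) (lam : Q → A) : Prop :=
  ∀ v a u, M.δ v a = some u → lam u = a

/-- The maximum co-lex order `<_A` on the states of a DFA:
`u <_A v` iff `α < β` for every `α ∈ I_u` and every `β ∈ I_v`. -/
def PDFA.colexStateLt {A Q : Type*} [LinearOrder A] (M : PDFA A Q) (u v : Q) : Prop :=
  ∀ α ∈ M.I u, ∀ β ∈ M.I v, colexLt (CStr.ofList α) (CStr.ofList β)

section AuxProofs

variable {A : Type*}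

lemma CStr.WF.bot_mono {f : CStr A} (hf : f.WF) {i j : ℕ} (hij : i ≤ j) (h : f i = ⊥) :
    f j = ⊥ := by
  induction j with
  | zero => obtain rfl : i = 0 := Nat.le_zero.mp hij; exact h
  | succ n ih =>
      rcases Nat.lt_or_ge i (n + 1) with hlt | hge
      · exact hf n (ih (Nat.lt_succ_iff.mp hlt))
      · obtain rfl : i = n + 1 := le_antisymm hij hge; exact h

lemma CStr.ofList_bot_iff (w : List A) (i : ℕ) :
    CStr.ofList w i = ⊥ ↔ w.length ≤ i := by
  unfold CStr.ofList
  split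
  · simp; omega
  · simp; omega

lemma CStr.ofList_wf (w : List A) : (CStr.ofList w).WF := by
  intro i hi
  rw [CStr.ofList_bot_iff] at hi ⊢
  omega

lemma CStr.ofList_finite (w : List A) : (CStr.ofList w).Finite :=
  ⟨w.length, (CStr.ofList_bot_iff w _).mpr le_rfl⟩

lemma CStr.ofList_injective : Function.Injective (CStr.ofList (A := A)) := by
  intro w w' h
  have hlen : w.length = w'.length := by
    by_contra hne
    rcases Nat.lt_or_ge w.length w'.length with hl | hl
    · have h1 : CStr.ofList w w.length = ⊥ := (CStr.ofList_bot_iff w _).mpr le_rfl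
      have h2 : ¬ CStr.ofList w' w.length = ⊥ := by rw [CStr.ofList_bot_iff]; omega
      exact h2 (h ▸ h1)
    · have hl' : w'.length < w.length := by omega
      have h1 : CStr.ofList w' w'.length = ⊥ := (CStr.ofList_bot_iff w' _).mpr le_rfl
      have h2 : ¬ CStr.ofList w w'.length = ⊥ := by rw [CStr.ofList_bot_iff]; omega
      exact h2 (h ▸ h1)
  apply List.ext_get hlen
  intro n h1 h2
  have hkey := congrFun h (w.length - 1 - n)
  have hi : w.length - 1 - n < w.length := by omega
  have hi' : w.length - 1 - n < w'.length := by omega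
  unfold CStr.ofList at hkey
  rw [dif_pos hi, dif_pos hi'] at hkey
  have e1 : w.length - 1 - (w.length - 1 - n) = n := by omega
  have e2 : w'.length - 1 - (w.length - 1 - n) = n := by omega
  rw [WithBot.coe_inj] at hkey
  simpa [List.get_eq_getElem, e1, e2] using hkey

lemma CStr.length_spec {f : CStr A} (hwf : f.WF) (hfin : f.Finite) (i : ℕ) :
    f i = ⊥ ↔ f.length ≤ i := by
  constructor
  · intro h; exact Nat.sInf_le h
  · intro h
    have hmem : f f.length = ⊥ := Nat.sInf_mem hfin
    exact hwf.bot_mono h hmem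

variable [LinearOrder A]

lemma colexLt_asymm {f g : CStr A} (h1 : colexLt f g) (h2 : colexLt g f) : False := by
  obtain ⟨i, hi, hlt⟩ := h1
  obtain ⟨j, hj, hlt'⟩ := h2
  rcases lt_trichotomy i j with h | rfl | h
  · rw [hj i h] at hlt; exact lt_irrefl _ hlt
  · exact lt_irrefl _ (hlt.trans hlt')
  · rw [hi j h] at hlt'; exact lt_irrefl _ hlt'

lemma colexLt_irrefl (f : CStr A) : ¬ colexLt f f := fun h => colexLt_asymm h h

/-- A finite greatest lower bound of a nonempty set of well-formed strings
belongs to the set. -/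
lemma IsColexGLB.mem_of_finite [Fintype A] {S : Set (CStr A)} (hS : S.Nonempty)
    (hwf : ∀ f ∈ S, CStr.WF f) {g : CStr A}
    (hg : IsColexGLB S g) (hfin : g.Finite) : g ∈ S := by
  classical
  by_contra hmem
  obtain ⟨gwf, hlb, hgr⟩ := hg
  set L := g.length with hL
  have hbot : ∀ i, g i = ⊥ ↔ L ≤ i := CStr.length_spec gwf hfin
  -- every member is strictly above g
  have hstrict : ∀ f ∈ S, colexLt g f := by
    intro f hf
    rcases hlb f hf with h | rfl
    · exact h
    · exact absurd hf hmem
  -- the alphabet is nonempty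
  obtain ⟨f0, hf0⟩ := hS
  obtain ⟨i0, hi0, hlt0⟩ := hstrict f0 hf0
  have hAne : Nonempty A := by
    rcases hx : f0 i0 with _ | a
    · rw [hx] at hlt0; exact absurd hlt0 not_lt_bot
    · exact ⟨a⟩
  have hAne' : (Finset.univ : Finset A).Nonempty := Finset.univ_nonempty
  set m : A := Finset.univ.min' hAne' with hm
  -- the candidate: g with the minimal letter appended at position L
  set h : CStr A := fun j => if j < L then g j else if j = L then (m : WithBot A) else ⊥
    with hdef
  have hwfh : h.WF := by
    intro i hi
    have hiL : L < i := by
      by_contra hc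
      rcases Nat.lt_or_ge i L with h1 | h2
      · rw [hdef] at hi; simp only [if_pos h1] at hi
        exact ((hbot i).not.mpr (by omega)) hi
      · obtain rfl : i = L := by omega
        rw [hdef] at hi; simp only [lt_irrefl, if_neg (lt_irrefl L), if_pos rfl] at hi
        exact WithBot.coe_ne_bot hi
    rw [hdef]; simp only
    rw [if_neg (by omega), if_neg (by omega)]
  have hgh : colexLt g h := by
    refine ⟨L, fun j hj => ?_, ?_⟩
    · rw [hdef]; simp only [if_pos hj]
    · rw [hdef]; simp only [if_neg (lt_irrefl L), if_pos rfl]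
      rw [(hbot L).mpr le_rfl]
      exact WithBot.bot_lt_coe m
  have hlbh : ∀ f ∈ S, colexLe h f := by
    intro f hf
    obtain ⟨i, hi, hlt⟩ := hstrict f hf
    have hiL : i ≤ L := by
      by_contra hc
      push_neg at hc
      have hfL : f L = ⊥ := (hi L hc).symm.trans ((hbot L).mpr le_rfl)
      have : f i = ⊥ := (hwf f hf).bot_mono (le_of_lt hc) hfL
      rw [this] at hlt
      exact absurd hlt (by simp)
    rcases Nat.lt_or_ge i L with hiL' | hiL''
    · left
      refine ⟨i, fun j hj => ?_, ?_⟩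
      · rw [hdef]; simp only [if_pos (hj.trans hiL')]; exact hi j hj
      · rw [hdef]; simp only [if_pos hiL']; exact hlt
    · obtain rfl : i = L := by omega
      have hfL : (⊥ : WithBot A) < f L := by
        rw [← (hbot L).mpr le_rfl]; exact hlt
      obtain ⟨b, hb⟩ : ∃ b : A, f L = (b : WithBot A) := by
        rcases hx : f L with _ | b
        · rw [hx] at hfL; exact absurd hfL not_lt_bot
        · exact ⟨b, rfl⟩
      have hmb : (m : WithBot A) ≤ f L := by
        rw [hb]; exact_mod_cast Finset.min'_le _ _ (Finset.mem_univ b)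
      rcases lt_or_eq_of_le hmb with hmb' | hmb'
      · left
        refine ⟨L, fun j hj => ?_, ?_⟩
        · rw [hdef]; simp only [if_pos hj]; exact hi j hj
        · rw [hdef]; simp only [if_neg (lt_irrefl L), if_pos rfl]; exact hmb'
      · -- h L = f L; compare beyond L
        by_cases hfh : ∀ j, h j = f j
        · right; exact funext hfh
        · left
          push_neg at hfh
          have hfind : ∃ j, h j ≠ f j := hfh
          set j0 := Nat.find hfind with hj0
          have hj0spec : h j0 ≠ f j0 := Nat.find_spec hfind
          have hj0min : ∀ j < j0, h j = f j := fun j hj =>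
            not_not.mp (Nat.find_min hfind hj)
          have hj0L : L < j0 := by
            rcases Nat.lt_or_ge j0 L with h1 | h2
            · exact absurd ((by rw [hdef]; simp only [if_pos h1]; exact hi j0 h1)) hj0spec
            · rcases lt_or_eq_of_le h2 with h3 | h3
              · exact h3
              · exfalso
                apply hj0spec
                rw [← h3]
                show (if L < L then g L else if L = L then (m : WithBot A) else ⊥) = f L
                rw [if_neg (lt_irrefl L), if_pos rfl, hmb']
          refine ⟨j0, hj0min, ?_⟩
          have hhj0 : h j0 = ⊥ := by
            rw [hdef]; simp only
            rw [if_neg (by omega), if_neg (by omega)]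
          rw [hhj0]
          rcases hx : f j0 with _ | b
          · exact absurd (hhj0.trans hx.symm) hj0spec
          · exact WithBot.bot_lt_coe b
  rcases hgr h hwfh hlbh with hc | hc
  · exact colexLt_asymm hgh hc
  · rw [hc] at hgh; exact colexLt_irrefl g hgh

/-- A finite least upper bound of a nonempty set of finite well-formed strings
belongs to the set. -/
lemma IsColexLUB.mem_of_finite [Fintype A] {S : Set (CStr A)} (hS : S.Nonempty)
    (hwf : ∀ f ∈ S, CStr.WF f) (hfinS : ∀ f ∈ S, CStr.Finite f) {g : CStr A}
    (hg : IsColexLUB S g) (hfin : g.Finite) : g ∈ S := by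
  classical
  by_contra hmem
  obtain ⟨gwf, hub, hle⟩ := hg
  set L := g.length with hL
  have hbot : ∀ i, g i = ⊥ ↔ L ≤ i := CStr.length_spec gwf hfin
  have hstrict : ∀ f ∈ S, colexLt f g := by
    intro f hf
    rcases hub f hf with h | h
    · exact h
    · exact absurd (h ▸ hf) hmem
  -- the set of first-disagreement positions
  set D : Set ℕ := {i | ∃ f ∈ S, (∀ j < i, f j = g j) ∧ f i < g i} with hD
  have hDL : ∀ i ∈ D, i < L := by
    rintro i ⟨f, hf, -, hlt⟩
    by_contra hc
    rw [(hbot i).mpr (by omega)] at hlt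
    exact absurd hlt (by simp)
  obtain ⟨f0, hf0⟩ := hS
  have hDne : D.Nonempty := by
    obtain ⟨i0, hi0, hlt0⟩ := hstrict f0 hf0
    exact ⟨i0, f0, hf0, hi0, hlt0⟩
  have hDbdd : BddAbove D := ⟨L, fun i hi => (hDL i hi).le⟩
  set istar := sSup D with histar
  have hiD : istar ∈ D := Nat.sSup_mem hDne hDbdd
  have hmaxD : ∀ j ∈ D, j ≤ istar := fun j hj => le_csSup hDbdd hj
  have hiL : istar < L := hDL _ hiD
  -- key: any member agreeing with g below istar is strictly below g at istar
  have hkey : ∀ f ∈ S, (∀ j < istar, f j = g j) → f istar < g istar := by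
    intro f hf hagree
    obtain ⟨j, hj, hlt⟩ := hstrict f hf
    have hjD : j ∈ D := ⟨f, hf, hj, hlt⟩
    have hji : j ≤ istar := hmaxD j hjD
    rcases lt_or_eq_of_le hji with h1 | h1
    · rw [hagree j h1] at hlt; exact absurd hlt (lt_irrefl _)
    · rw [← h1]; exact hlt
  -- the set of values at istar of members agreeing with g below istar
  set V : Set (WithBot A) := {x | ∃ f ∈ S, (∀ j < istar, f j = g j) ∧ f istar = x} with hV
  have hVne : V.Nonempty := by
    obtain ⟨f, hf, hagree, -⟩ := hiD
    exact ⟨f istar, f, hf, hagree, rfl⟩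
  haveI : Fintype (WithBot A) := inferInstanceAs (Fintype (Option A))
  have hVfin : V.Finite := Set.toFinite V
  obtain ⟨c, hcV, hcmax⟩ : ∃ c ∈ V, ∀ x ∈ V, x ≤ c := by
    obtain ⟨c, hc1, hc2⟩ :=
      hVfin.toFinset.exists_max_image id (by rwa [← Set.Finite.toFinset_nonempty hVfin] at hVne)
    exact ⟨c, (Set.Finite.mem_toFinset hVfin).mp hc1,
      fun x hx => hc2 x ((Set.Finite.mem_toFinset hVfin).mpr hx)⟩
  have hclt : c < g istar := by
    obtain ⟨f, hf, hagree, hfc⟩ := hcV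
    rw [← hfc]; exact hkey f hf hagree
  -- the alphabet is nonempty
  have hAne : Nonempty A := by
    rcases hx : g istar with _ | a
    · exact absurd hx ((hbot istar).not.mpr (by omega))
    · exact ⟨a⟩
  have hAne' : (Finset.univ : Finset A).Nonempty := Finset.univ_nonempty
  set mA : A := Finset.univ.max' hAne' with hmA
  have hleMA : ∀ x : WithBot A, x ≤ (mA : WithBot A) := by
    intro x
    rcases x with _ | a
    · exact bot_le
    · exact WithBot.coe_le_coe.mpr (Finset.le_max' _ _ (Finset.mem_univ a))
  -- the candidate smaller upper bound
  set h : CStr A := fun j =>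
    if j < istar then g j else if j = istar then c
    else (if c = ⊥ then ⊥ else (mA : WithBot A)) with hdef
  have hlow : ∀ j < istar, h j = g j := by
    intro j hj
    show (if j < istar then g j else if j = istar then c
      else (if c = ⊥ then ⊥ else (mA : WithBot A))) = g j
    rw [if_pos hj]
  have hat : h istar = c := by
    show (if istar < istar then g istar else if istar = istar then c
      else (if c = ⊥ then ⊥ else (mA : WithBot A))) = c
    rw [if_neg (lt_irrefl istar), if_pos rfl]
  have hhigh : ∀ j, istar < j → h j = (if c = ⊥ then ⊥ else (mA : WithBot A)) := by
    intro j hj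
    show (if j < istar then g j else if j = istar then c
      else (if c = ⊥ then ⊥ else (mA : WithBot A))) = _
    rw [if_neg (by omega), if_neg (by omega)]
  have hwfh : h.WF := by
    intro i hi
    have hii : istar ≤ i := by
      by_contra hc
      rw [hlow i (by omega)] at hi
      exact ((hbot i).not.mpr (by omega)) hi
    have hcbot : c = ⊥ := by
      rcases lt_or_eq_of_le hii with h1 | h1
      · rw [hhigh i h1] at hi
        by_contra hc
        rw [if_neg hc] at hi
        exact WithBot.coe_ne_bot hi
      · rw [← h1, hat] at hi; exact hi
    rw [hhigh (i + 1) (by omega), if_pos hcbot]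
  have hhg : colexLt h g := ⟨istar, hlow, by rw [hat]; exact hclt⟩
  have hubh : ∀ f ∈ S, colexLe f h := by
    intro f hf
    by_cases hcase : ∀ j < istar, f j = g j
    · have hfV : f istar ∈ V := ⟨f, hf, hcase, rfl⟩
      have hfc : f istar ≤ c := hcmax _ hfV
      rcases lt_or_eq_of_le hfc with h1 | h1
      · left
        exact ⟨istar, fun j hj => (hcase j hj).trans (hlow j hj).symm, by rw [hat]; exact h1⟩
      · by_cases hc : c = ⊥
        · right
          funext j
          rcases lt_trichotomy j istar with h2 | h2 | h2
          · rw [hlow j h2]; exact hcase j h2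
          · rw [h2, hat]; exact h1
          · rw [hhigh j h2, if_pos hc]
            exact (hwf f hf).bot_mono h2.le (h1.trans hc)
        · left
          have hfne : f ≠ h := by
            obtain ⟨mth, hmth⟩ := hfinS f hf
            intro he
            have h2 : f (max mth (istar + 1)) = ⊥ :=
              (hwf f hf).bot_mono (le_max_left _ _) hmth
            rw [he, hhigh _ (by omega), if_neg hc] at h2
            exact WithBot.coe_ne_bot h2
          have hex : ∃ j, f j ≠ h j := Function.ne_iff.mp hfne
          set j0 := Nat.find hex with hj0
          have hj0spec : f j0 ≠ h j0 := Nat.find_spec hex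
          have hj0min : ∀ j < j0, f j = h j := fun j hj =>
            not_not.mp (Nat.find_min hex hj)
          have hj0i : istar < j0 := by
            rcases lt_trichotomy j0 istar with h2 | h2 | h2
            · exact absurd ((hcase j0 h2).trans (hlow j0 h2).symm) hj0spec
            · exact absurd (h2 ▸ (h1.trans hat.symm)) hj0spec
            · exact h2
          refine ⟨j0, hj0min, ?_⟩
          rw [hhigh j0 hj0i, if_neg hc]
          refine lt_of_le_of_ne (hleMA _) ?_
          intro he
          apply hj0spec
          rw [hhigh j0 hj0i, if_neg hc]
          exact he
    · left
      push_neg at hcase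
      obtain ⟨k, hk, hkne⟩ := hcase
      have hex : ∃ j, f j ≠ g j := ⟨k, hkne⟩
      set j1 := Nat.find hex with hj1
      have hj1k : j1 ≤ k := Nat.find_le hkne
      have hj1i : j1 < istar := by omega
      have hj1min : ∀ j < j1, f j = g j := fun j hj => not_not.mp (Nat.find_min hex hj)
      obtain ⟨j', hj', hlt'⟩ := hstrict f hf
      have hj1j' : j1 = j' := by
        have h2 : j1 ≤ j' := Nat.find_le (ne_of_lt hlt')
        rcases lt_or_eq_of_le h2 with h3 | h3
        · exact absurd (hj' j1 h3) (Nat.find_spec hex)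
        · exact h3
      refine ⟨j1, fun j hj => (hj1min j hj).trans (hlow j (by omega)).symm, ?_⟩
      rw [hlow j1 hj1i, hj1j']
      exact hlt'
  rcases hle h hwfh hubh with hc | hc
  · exact colexLt_asymm hhg hc
  · rw [← hc] at hhg; exact colexLt_irrefl g hhg

end AuxProofs

/-- For two distinct states `u ≠ v` of a DFA whose initial
state has no incoming transitions and all of whose states are reachable:
if `inf I_u = inf I_v` or `inf I_u = sup I_v`, then `inf I_u` has infinite
length; likewise, if `sup I_u = sup I_v` or `sup I_u = inf I_v`, then
`sup I_u` has infinite length. -/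
theorem equal_infimum_supremum_of_distinct_states_infinite
    {A Q : Type*} [LinearOrder A] [Fintype A] [Fintype Q]
    (M : PDFA A Q) (hstart : M.NoIncomingStart) (hreach : M.Reachable)
    (u v : Q) (huv : u ≠ v) (γinfu γsupu γinfv γsupv : CStr A)
    (hinfu : IsColexGLB (CStr.ofList '' M.I u) γinfu)
    (hsupu : IsColexLUB (CStr.ofList '' M.I u) γsupu)
    (hinfv : IsColexGLB (CStr.ofList '' M.I v) γinfv)
    (hsupv : IsColexLUB (CStr.ofList '' M.I v) γsupv) :
    ((γinfu = γinfv ∨ γinfu = γsupv) → ¬ γinfu.Finite) ∧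
    ((γsupu = γsupv ∨ γsupu = γinfv) → ¬ γsupu.Finite) := by
  have hSune : (CStr.ofList '' M.I u).Nonempty := by
    obtain ⟨w, hw⟩ := hreach u; exact ⟨_, ⟨w, hw, rfl⟩⟩
  have hSvne : (CStr.ofList '' M.I v).Nonempty := by
    obtain ⟨w, hw⟩ := hreach v; exact ⟨_, ⟨w, hw, rfl⟩⟩
  have hwfu : ∀ f ∈ CStr.ofList '' M.I u, CStr.WF f := by
    rintro f ⟨w, -, rfl⟩; exact CStr.ofList_wf w
  have hwfv : ∀ f ∈ CStr.ofList '' M.I v, CStr.WF f := by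
    rintro f ⟨w, -, rfl⟩; exact CStr.ofList_wf w
  have hfinSu : ∀ f ∈ CStr.ofList '' M.I u, CStr.Finite f := by
    rintro f ⟨w, -, rfl⟩; exact CStr.ofList_finite w
  have hfinSv : ∀ f ∈ CStr.ofList '' M.I v, CStr.Finite f := by
    rintro f ⟨w, -, rfl⟩; exact CStr.ofList_finite w
  have key : ∀ γ : CStr A, γ ∈ CStr.ofList '' M.I u → γ ∈ CStr.ofList '' M.I v → False := by
    rintro γ ⟨α, hα, hαe⟩ ⟨β, hβ, hβe⟩
    have hab : α = β := CStr.ofList_injective (hαe.trans hβe.symm)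
    apply huv
    have h1 : M.δStar M.start α = some u := hα
    have h2 : M.δStar M.start α = some v := by rw [hab]; exact hβ
    exact Option.some_injective _ (h1.symm.trans h2)
  constructor
  · rintro (h | h) hf
    · exact key γinfu (hinfu.mem_of_finite hSune hwfu hf)
        (h ▸ hinfv.mem_of_finite hSvne hwfv (h ▸ hf) : γinfu ∈ _)
    · exact key γinfu (hinfu.mem_of_finite hSune hwfu hf)
        (h ▸ hsupv.mem_of_finite hSvne hwfv hfinSv (h ▸ hf) : γinfu ∈ _)
  · rintro (h | h) hf
    · exact key γsupu (hsupu.mem_of_finite hSune hwfu hfinSu hf)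
        (h ▸ hsupv.mem_of_finite hSvne hwfv hfinSv (h ▸ hf) : γsupu ∈ _)
    · exact key γsupu (hsupu.mem_of_finite hSune hwfu hfinSu hf)
        (h ▸ hinfv.mem_of_finite hSvne hwfv (h ▸ hf) : γsupu ∈ _)
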